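/- Let m ∈ ℚ with m ≠ 0 and define x₁ : (0,1) → ℝ by x₁(z) = z^(3/4)·(1−z)^((m+1)/(2m)), with real powers interpreted via rpow. Then x₁ is twice differentiable on (0,1) and satisfies x₁''(z) = r(z)·x₁(z) for all z ∈ (0,1), where r(z) = (−3m² − 6m(m+2)·z + (m+2)(5m+2)·z²) / (16 m² z² (1−z)²). -/

import Mathlib

/-- The algebraic solution `x₁(z) = z^{3/4}(1−z)^{(m+1)/(2m)}`
(equation (eq:X_sol_1_k=2_m) of the paper) of the reduced variational equation
`X'' = r(z)X` with
`r(z) = (−3m² − 6m(m+2)z + (m+2)(5m+2)z²)/(16m²z²(1−z)²)`: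
`x₁` is twice differentiable on `(0,1)` and satisfies the equation there. -/
theorem x1_solves_reduced_equation_k2m (m : ℚ) (hm : m ≠ 0) :
    ∃ x₁' : ℝ → ℝ,
      (∀ z ∈ Set.Ioo (0 : ℝ) 1,
        HasDerivAt
          (fun z : ℝ => z ^ ((3 : ℝ)/4) * (1 - z) ^ (((m : ℝ) + 1)/(2 * (m : ℝ))))
          (x₁' z) z) ∧
      (∀ z ∈ Set.Ioo (0 : ℝ) 1,
        HasDerivAt x₁'
          (((-3 * (m : ℝ) ^ 2 - 6 * (m : ℝ) * ((m : ℝ) + 2) * z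
              + ((m : ℝ) + 2) * (5 * (m : ℝ) + 2) * z ^ 2)
            / (16 * (m : ℝ) ^ 2 * z ^ 2 * (1 - z) ^ 2))
            * (z ^ ((3 : ℝ)/4) * (1 - z) ^ (((m : ℝ) + 1)/(2 * (m : ℝ))))) z) := by
  have hm' : (m : ℝ) ≠ 0 := by exact_mod_cast hm
  set a : ℝ := (3 : ℝ)/4 with ha
  set b : ℝ := ((m : ℝ) + 1)/(2 * (m : ℝ)) with hb
  refine ⟨fun z => z ^ (a - 1) * (1 - z) ^ (b - 1) * (a * (1 - z) - b * z), ?_, ?_⟩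
  · rintro z ⟨hz0, hz1⟩
    have hz0' : z ≠ 0 := ne_of_gt hz0
    have h1z : (0 : ℝ) < 1 - z := by linarith
    have h1z' : (1 : ℝ) - z ≠ 0 := ne_of_gt h1z
    have d1 : HasDerivAt (fun z : ℝ => z ^ a) (a * z ^ (a - 1)) z :=
      Real.hasDerivAt_rpow_const (Or.inl hz0')
    have dsub : HasDerivAt (fun z : ℝ => 1 - z) (-1) z := by
      simpa using (hasDerivAt_id z).const_sub 1
    have d2 : HasDerivAt (fun z : ℝ => (1 - z) ^ b) (-1 * b * (1 - z) ^ (b - 1)) z :=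
      dsub.rpow_const (Or.inl h1z')
    have := d1.mul d2
    convert this using 1
    iterate 3 rfl
    have e1 : z ^ a = z ^ (a - 1) * z := by
      rw [← Real.rpow_add_one hz0' (a - 1)]; ring_nf
    have e2 : (1 - z) ^ b = (1 - z) ^ (b - 1) * (1 - z) := by
      rw [← Real.rpow_add_one h1z' (b - 1)]; ring_nf
    rw [e1, e2]; ring
  · rintro z ⟨hz0, hz1⟩
    have hz0' : z ≠ 0 := ne_of_gt hz0
    have h1z : (0 : ℝ) < 1 - z := by linarith
    have h1z' : (1 : ℝ) - z ≠ 0 := ne_of_gt h1z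
    have d1 : HasDerivAt (fun z : ℝ => z ^ (a - 1)) ((a - 1) * z ^ (a - 1 - 1)) z :=
      Real.hasDerivAt_rpow_const (Or.inl hz0')
    have dsub : HasDerivAt (fun z : ℝ => 1 - z) (-1) z := by
      simpa using (hasDerivAt_id z).const_sub 1
    have d2 : HasDerivAt (fun z : ℝ => (1 - z) ^ (b - 1))
        (-1 * (b - 1) * (1 - z) ^ (b - 1 - 1)) z :=
      dsub.rpow_const (Or.inl h1z')
    have d3 : HasDerivAt (fun z : ℝ => a * (1 - z) - b * z) (a * (-1) - b) z := by
      exact ((dsub.const_mul a).sub ((hasDerivAt_id z).const_mul b)).congr_deriv (by ring)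
    have := (d1.mul d2).mul d3
    convert this using 1
    iterate 3 rfl
    simp only [Pi.mul_apply]
    have e1 : z ^ (a - 1) = z ^ a / z := by
      rw [Real.rpow_sub hz0, Real.rpow_one]
    have e2 : z ^ (a - 1 - 1) = z ^ a / z / z := by
      rw [Real.rpow_sub hz0, Real.rpow_sub hz0, Real.rpow_one]
    have e3 : (1 - z) ^ (b - 1) = (1 - z) ^ b / (1 - z) := by
      rw [Real.rpow_sub h1z, Real.rpow_one]
    have e4 : (1 - z) ^ (b - 1 - 1) = (1 - z) ^ b / (1 - z) / (1 - z) := by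
      rw [Real.rpow_sub h1z, Real.rpow_sub h1z, Real.rpow_one]
    rw [e1, e2, e3, e4, ha, hb]
    field_simp
    ring
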